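/- Fix an orthonormal basis (v₁,…,vₙ) of X, and let i, j, k ⊆ {1,…,n}. Partition the indices as a = i∖(j∪k), b = (j∩k)∖i, c = i∩j∩k, d = (i∩j)∖k, e = k∖(i∪j), x = j∖(i∪k), y = (i∩k)∖j. Then ⦃a_i†, a_j⦄ v_k = δ_{x∪y=∅} · (δ_{d=∅} − δ_{c=∅}) · (−1)^{|d| + N(a∪b, d∪e)} · v_{a∪c∪e}, where δ_P = 1 if condition P holds and 0 otherwise; in particular, ⦃a_i†, a_j⦄ v_k = 0 unless x = y = ∅ and exactly one of c, d is empty. -/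

import Mathlib

/-!
Setup: `X` is a finite-dimensional real inner product space, `⋀X` its exterior
algebra.  We hypothesize a bilinear form `innE` on the exterior algebra which makes
the wedges of any orthonormal basis of `X` (over increasing index sets) orthonormal
— this characterizes the inner product of the paper — and a bilinear left
contraction `lcontr` adjoint to the wedge product: `⟨M⌟N, L⟩ = ⟨N, M∧L⟩`.
-/

noncomputable section

open ExteriorAlgebra

/-- The wedge product `v_{i₁} ∧ ⋯ ∧ v_{i_p}` of the vectors `v i`, `i ∈ s`,
taken in increasing order of the indices. -/
def wedgeOf {X : Type*} [AddCommGroup X] [Module ℝ X] {n : ℕ}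
    (v : Fin n → X) (s : Finset (Fin n)) : ExteriorAlgebra ℝ X :=
  ((s.sort (· ≤ ·)).map fun i => ι ℝ (v i)).prod

/-- The inner space `isp M = {v : v ∧ M = 0}`. -/
def isp {X : Type*} [AddCommGroup X] [Module ℝ X]
    (M : ExteriorAlgebra ℝ X) : Submodule ℝ X where
  carrier := {x | ι ℝ x * M = 0}
  add_mem' := by
    intro a b ha hb
    simp only [Set.mem_setOf_eq, map_add, add_mul] at *
    rw [ha, hb, add_zero]
  zero_mem' := by simp
  smul_mem' := by
    intro c x hx
    simp only [Set.mem_setOf_eq, map_smul, smul_mul_assoc] at *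
    rw [hx, smul_zero]

/-- The space `{v : v ⌟ M = 0}`, whose orthogonal complement is the outer space. -/
def ospKer {X : Type*} [NormedAddCommGroup X] [InnerProductSpace ℝ X]
    (lcontr : ExteriorAlgebra ℝ X →ₗ[ℝ] ExteriorAlgebra ℝ X →ₗ[ℝ] ExteriorAlgebra ℝ X)
    (M : ExteriorAlgebra ℝ X) : Submodule ℝ X where
  carrier := {x | lcontr (ι ℝ x) M = 0}
  add_mem' := by
    intro a b ha hb
    simp only [Set.mem_setOf_eq, map_add, LinearMap.add_apply] at *
    rw [ha, hb, add_zero]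
  zero_mem' := by simp
  smul_mem' := by
    intro c x hx
    simp only [Set.mem_setOf_eq, map_smul, LinearMap.smul_apply] at *
    rw [hx, smul_zero]

/-- The outer space `osp M = {v : v ⌟ M = 0}ᗮ`. -/
def osp {X : Type*} [NormedAddCommGroup X] [InnerProductSpace ℝ X]
    (lcontr : ExteriorAlgebra ℝ X →ₗ[ℝ] ExteriorAlgebra ℝ X →ₗ[ℝ] ExteriorAlgebra ℝ X)
    (M : ExteriorAlgebra ℝ X) : Submodule ℝ X :=
  (ospKer lcontr M)ᗮ

/-- `innE` is the inner product of `⋀X`: for every orthonormal basis of `X`, the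
wedges of basis vectors over increasing index sets form an orthonormal family. -/
def InnerOK {X : Type*} [NormedAddCommGroup X] [InnerProductSpace ℝ X]
    (innE : ExteriorAlgebra ℝ X →ₗ[ℝ] ExteriorAlgebra ℝ X →ₗ[ℝ] ℝ) : Prop :=
  ∀ (m : ℕ) (w : OrthonormalBasis (Fin m) ℝ X) (s t : Finset (Fin m)),
    innE (wedgeOf (⇑w) s) (wedgeOf (⇑w) t) = if s = t then 1 else 0

/-- `lcontr` is the left contraction: `⟨M ⌟ N, L⟩ = ⟨N, M ∧ L⟩`. -/
def ContrOK {X : Type*} [NormedAddCommGroup X] [InnerProductSpace ℝ X]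
    (innE : ExteriorAlgebra ℝ X →ₗ[ℝ] ExteriorAlgebra ℝ X →ₗ[ℝ] ℝ)
    (lcontr : ExteriorAlgebra ℝ X →ₗ[ℝ] ExteriorAlgebra ℝ X →ₗ[ℝ] ExteriorAlgebra ℝ X) :
    Prop :=
  ∀ M N L : ExteriorAlgebra ℝ X, innE (lcontr M N) L = innE N (M * L)

/-- `N(r,s)`: the number of pairs `(a, b)` with `a ∈ r`, `b ∈ s` and `a > b`. -/
def npairs {n : ℕ} (r s : Finset (Fin n)) : ℕ :=
  ((r ×ˢ s).filter fun ab => ab.2 < ab.1).card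

/-!
Both terms of the supercommutator are computed from two sign rules for basis multivectors:
`v_s ∧ v_t = (-1)^N(s,t) v_{s∪t}` when `s, t` are disjoint (and `0` otherwise), and, because the
`v_s` are orthonormal and span `⋀X`, `v_j ⌟ v_k = (-1)^N(j,k∖j) v_{k∖j}` when `j ⊆ k` (and `0`
otherwise). If `x` or `y` is nonempty, both terms vanish. Otherwise `i = a ∪ c ∪ d`,
`j = b ∪ c ∪ d`, `k = b ∪ c ∪ e`; the term `a_i† a_j v_k` survives exactly when `d = ∅`, the term
`a_j a_i† v_k` exactly when `c = ∅`, and both signs reduce to `(-1)^(|d| + N(a∪b, d∪e))` because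
`N` is additive over disjoint unions and `N(s,t) + N(t,s) = |s| |t|` for disjoint `s, t`.
-/

open Finset

lemma neg_one_pow_eq_of_mod_two_eq {R : Type*} [Ring R] {m n : ℕ} (h : m % 2 = n % 2) :
    (-1 : R) ^ m = (-1) ^ n := by
  rw [neg_one_pow_eq_pow_mod_two, h, ← neg_one_pow_eq_pow_mod_two]

section npairs

variable {n : ℕ}

lemma npairs_union_left {s₁ s₂ : Finset (Fin n)} (h : Disjoint s₁ s₂) (t : Finset (Fin n)) :
    npairs (s₁ ∪ s₂) t = npairs s₁ t + npairs s₂ t := by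
  rw [npairs, union_product, filter_union,
    card_union_of_disjoint (disjoint_filter_filter (disjoint_product.2 (Or.inl h)))]
  rfl

lemma npairs_union_right (s : Finset (Fin n)) {t₁ t₂ : Finset (Fin n)} (h : Disjoint t₁ t₂) :
    npairs s (t₁ ∪ t₂) = npairs s t₁ + npairs s t₂ := by
  rw [npairs, product_union, filter_union,
    card_union_of_disjoint (disjoint_filter_filter (disjoint_product.2 (Or.inr h)))]
  rfl

lemma npairs_insert_left {m : Fin n} {s : Finset (Fin n)} (hm : m ∉ s) (t : Finset (Fin n)) :
    npairs (insert m s) t = #{x ∈ t | x < m} + npairs s t := by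
  rw [insert_eq, npairs_union_left (disjoint_singleton_left.2 hm), npairs, singleton_product,
    filter_map, card_map]
  rfl

lemma npairs_add_npairs_swap {s t : Finset (Fin n)} (h : Disjoint s t) :
    npairs s t + npairs t s = #s * #t := by
  have hswap : npairs t s = #{pq ∈ s ×ˢ t | ¬ pq.2 < pq.1} := by
    rw [npairs, ← card_map (Equiv.prodComm _ _).toEmbedding]
    congr 1
    ext ⟨p, q⟩
    simp only [mem_map_equiv, mem_filter, mem_product, Equiv.prodComm_symm, Equiv.prodComm_apply,
      Prod.swap_prod_mk, not_lt]
    exact ⟨fun ⟨⟨hq, hp⟩, hpq⟩ => ⟨⟨hp, hq⟩, hpq.le⟩, fun ⟨⟨hp, hq⟩, hpq⟩ =>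
      ⟨⟨hq, hp⟩, hpq.lt_of_ne fun hpq => disjoint_left.1 h hp (hpq ▸ hq)⟩⟩
  rw [hswap, npairs, card_filter_add_card_filter_not, card_product]

lemma card_mul_card_add_npairs_add_npairs_mod_two {a b d e : Finset (Fin n)}
    (hab : Disjoint a b) (had : Disjoint a d) (hae : Disjoint a e) (hbd : Disjoint b d)
    (hbe : Disjoint b e) (hde : Disjoint d e) :
    (#(a ∪ d) * #(b ∪ d) + npairs (a ∪ d) (b ∪ e) + npairs (b ∪ d) (a ∪ e)) % 2 =
      (#d + npairs (a ∪ b) (d ∪ e)) % 2 := by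
  have hprod : #(a ∪ d) * #(b ∪ d) = #a * #b + #a * #d + #b * #d + #d * #d := by
    rw [card_union_of_disjoint had, card_union_of_disjoint hbd]
    ring
  have hsq : (#d * #d + #d) % 2 = 0 :=
    Nat.even_iff.1 (Nat.mul_succ _ _ ▸ Nat.even_mul_succ_self #d)
  have hab' := npairs_add_npairs_swap hab
  have had' := npairs_add_npairs_swap had
  have hbd' := npairs_add_npairs_swap hbd
  simp only [hprod, npairs_union_left had, npairs_union_left hbd, npairs_union_left hab,
    npairs_union_right _ hbe, npairs_union_right _ hae, npairs_union_right _ hde]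
  omega

end npairs

lemma ι_mul_ι_comm {R M : Type*} [CommRing R] [AddCommGroup M] [Module R M] (x y : M) :
    ι R x * ι R y = -(ι R y * ι R x) :=
  eq_neg_of_add_eq_zero_left (ι_add_mul_swap x y)

section wedge

variable {X : Type*} [AddCommGroup X] [Module ℝ X] {n : ℕ} (v : Fin n → X)

@[simp]
lemma wedgeOf_empty : wedgeOf v ∅ = 1 := by
  simp [wedgeOf]

lemma wedgeOf_singleton (a : Fin n) : wedgeOf v {a} = ι ℝ (v a) := by
  simp [wedgeOf]

lemma wedgeOf_insert_of_forall_lt {a : Fin n} {s : Finset (Fin n)} (h : ∀ x ∈ s, a < x) :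
    wedgeOf v (insert a s) = ι ℝ (v a) * wedgeOf v s := by
  rw [wedgeOf, sort_insert _ (fun x hx => (h x hx).le) fun ha => lt_irrefl a (h a ha),
    List.map_cons, List.prod_cons, wedgeOf]

lemma ι_mul_wedgeOf (a : Fin n) (s : Finset (Fin n)) :
    ι ℝ (v a) * wedgeOf v s =
      if a ∈ s then 0 else (-1 : ℝ) ^ #{x ∈ s | x < a} • wedgeOf v (insert a s) := by
  induction s using Finset.induction_on_min with
  | empty => simp [wedgeOf_singleton]
  | insert m s hm ih =>
    rw [wedgeOf_insert_of_forall_lt v hm]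
    rcases lt_trichotomy a m with ham | rfl | hma
    · have hlt : ∀ x ∈ insert m s, a < x := by
        simpa [ham] using fun x hx => ham.trans (hm x hx)
      rw [if_neg fun ha => lt_irrefl a (hlt a ha), filter_false_of_mem fun x hx => (hlt x hx).asymm,
        card_empty, pow_zero, one_smul, wedgeOf_insert_of_forall_lt v hlt,
        wedgeOf_insert_of_forall_lt v hm]
    · rw [← mul_assoc, ι_sq_zero, zero_mul, if_pos (mem_insert_self a s)]
    · have hmin : ∀ x ∈ insert a s, m < x := by simpa [hma] using hm
      have hms : m ∉ s := fun h => lt_irrefl m (hm m h)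
      rw [← mul_assoc, ι_mul_ι_comm, neg_mul, mul_assoc, ih]
      simp only [mem_insert, hma.ne', false_or]
      split_ifs
      · rw [mul_zero, neg_zero]
      · rw [mul_smul_comm, ← wedgeOf_insert_of_forall_lt v hmin, insert_comm, filter_insert,
          if_pos hma, card_insert_of_notMem fun h => hms (mem_filter.1 h).1, pow_succ, mul_neg_one,
          neg_smul]

lemma wedgeOf_mul_wedgeOf (s t : Finset (Fin n)) :
    wedgeOf v s * wedgeOf v t =
      if Disjoint s t then (-1 : ℝ) ^ npairs s t • wedgeOf v (s ∪ t) else 0 := by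
  induction s using Finset.induction_on_min with
  | empty => simp [npairs]
  | insert m s hm ih =>
    have hms : m ∉ s := fun h => lt_irrefl m (hm m h)
    rw [wedgeOf_insert_of_forall_lt v hm, mul_assoc, ih]
    by_cases hst : Disjoint s t
    · rw [if_pos hst, mul_smul_comm, ι_mul_wedgeOf]
      simp only [mem_union, hms, false_or, disjoint_insert_left, hst, and_true]
      split_ifs
      · rw [smul_zero]
      · rw [filter_union, filter_false_of_mem fun x hx => (hm x hx).asymm, empty_union, smul_smul,
          ← pow_add, add_comm, npairs_insert_left hms, insert_union]
    · simp [hst]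

lemma span_range_wedgeOf (b : Module.Basis (Fin n) ℝ X) :
    Submodule.span ℝ (Set.range (wedgeOf b)) = ⊤ := by
  set S := Submodule.span ℝ (Set.range (wedgeOf b))
  have hmem : ∀ s, wedgeOf b s ∈ S := fun s => Submodule.subset_span ⟨s, rfl⟩
  have hmul : ∀ p ∈ S, ∀ q ∈ S, p * q ∈ S := by
    intro p hp q hq
    have hpq := Submodule.mul_mem_mul hp hq
    rw [Submodule.span_mul_span] at hpq
    refine Submodule.span_le.2 ?_ hpq
    rintro _ ⟨_, ⟨s, rfl⟩, _, ⟨t, rfl⟩, rfl⟩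
    change wedgeOf b s * wedgeOf b t ∈ S
    rw [wedgeOf_mul_wedgeOf]
    split_ifs
    exacts [S.smul_mem _ (hmem _), S.zero_mem]
  refine Submodule.eq_top_iff'.2 fun M => ?_
  induction M using ExteriorAlgebra.induction with
  | algebraMap r =>
    rw [Algebra.algebraMap_eq_smul_one, ← wedgeOf_empty b]
    exact S.smul_mem r (hmem ∅)
  | ι x =>
    rw [← b.sum_repr x, map_sum]
    refine S.sum_mem fun i _ => ?_
    rw [map_smul, ← wedgeOf_singleton]
    exact S.smul_mem _ (hmem _)
  | mul p q hp hq => exact hmul p hp q hq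
  | add p q hp hq => exact S.add_mem hp hq

end wedge

section operators

/-- `⦃S, T⦄` for operators of parities `s`, `t`; only `s, t` mod 2 matter, so the degree `#r`
serves as the parity of `a_r†` and `a_r`. -/
def supercommutator {R M : Type*} [CommRing R] [AddCommGroup M] [Module R M]
    (S T : Module.End R M) (s t : ℕ) : Module.End R M :=
  S * T - (-1 : R) ^ (s * t) • (T * S)

variable {X : Type*} [AddCommGroup X] [Module ℝ X] {n : ℕ}

def creation (v : Fin n → X) (r : Finset (Fin n)) : Module.End ℝ (ExteriorAlgebra ℝ X) :=
  LinearMap.mulLeft ℝ (wedgeOf v r)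

def annihilation
    (lcontr : ExteriorAlgebra ℝ X →ₗ[ℝ] ExteriorAlgebra ℝ X →ₗ[ℝ] ExteriorAlgebra ℝ X)
    (v : Fin n → X) (r : Finset (Fin n)) : Module.End ℝ (ExteriorAlgebra ℝ X) :=
  lcontr (wedgeOf v r)

lemma supercommutator_creation_annihilation_apply
    (lcontr : ExteriorAlgebra ℝ X →ₗ[ℝ] ExteriorAlgebra ℝ X →ₗ[ℝ] ExteriorAlgebra ℝ X)
    (v : Fin n → X) (i j : Finset (Fin n)) (M : ExteriorAlgebra ℝ X) :
    supercommutator (creation v i) (annihilation lcontr v j) #i #j M =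
      wedgeOf v i * lcontr (wedgeOf v j) M -
        (-1 : ℝ) ^ (#i * #j) • lcontr (wedgeOf v j) (wedgeOf v i * M) :=
  rfl

end operators

section

variable {X : Type*} [NormedAddCommGroup X] [InnerProductSpace ℝ X] {n : ℕ}
  {innE : ExteriorAlgebra ℝ X →ₗ[ℝ] ExteriorAlgebra ℝ X →ₗ[ℝ] ℝ}
  {lcontr : ExteriorAlgebra ℝ X →ₗ[ℝ] ExteriorAlgebra ℝ X →ₗ[ℝ] ExteriorAlgebra ℝ X}

lemma eq_of_forall_innE_wedgeOf_eq (hinn : InnerOK innE) (v : OrthonormalBasis (Fin n) ℝ X)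
    {M N : ExteriorAlgebra ℝ X} (h : ∀ t, innE M (wedgeOf v t) = innE N (wedgeOf v t)) :
    M = N := by
  rw [← sub_eq_zero]
  have hspan : M - N ∈ Submodule.span ℝ (Set.range (wedgeOf v)) := by
    rw [← v.coe_toBasis, span_range_wedgeOf]
    trivial
  obtain ⟨c, hc⟩ := (Submodule.mem_span_range_iff_exists_fun ℝ).1 hspan
  have hc0 : ∀ t, c t = 0 := by
    intro t
    have ht := sub_eq_zero.2 (h t)
    rw [← LinearMap.sub_apply, ← map_sub, ← hc] at ht
    simpa [hinn n v] using ht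
  simp [← hc, hc0]

lemma lcontr_wedgeOf (hinn : InnerOK innE) (hc : ContrOK innE lcontr)
    (v : OrthonormalBasis (Fin n) ℝ X) (j k : Finset (Fin n)) :
    lcontr (wedgeOf v j) (wedgeOf v k) =
      if j ⊆ k then (-1 : ℝ) ^ npairs j (k \ j) • wedgeOf v (k \ j) else 0 := by
  refine eq_of_forall_innE_wedgeOf_eq hinn v fun t => ?_
  rw [hc, wedgeOf_mul_wedgeOf]
  by_cases h : j ⊆ k ∧ k \ j = t
  · obtain ⟨hjk, rfl⟩ := h
    simp [hjk, disjoint_sdiff, union_sdiff_of_subset hjk, hinn n v]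
  · have hk : Disjoint j t → k ≠ j ∪ t := by
      rintro hjt rfl
      exact h ⟨subset_union_left, union_sdiff_cancel_left hjt⟩
    split_ifs with hjt hjk <;>
      simp_all [hinn n v]

theorem supercommutator_creation_annihilation_wedgeOf_of_not_subset (hinn : InnerOK innE)
    (hc : ContrOK innE lcontr) (v : OrthonormalBasis (Fin n) ℝ X) {i j k : Finset (Fin n)}
    (h : ¬ (j ⊆ i ∪ k ∧ i ∩ k ⊆ j)) :
    supercommutator (creation v i) (annihilation lcontr v j) #i #j (wedgeOf v k) = 0 := by
  have first : wedgeOf v i * lcontr (wedgeOf v j) (wedgeOf v k) = 0 := by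
    rw [lcontr_wedgeOf hinn hc]
    split_ifs with hjk
    · have hik : ¬ Disjoint i (k \ j) := by
        refine fun hdis => h ⟨hjk.trans subset_union_right, fun p hp => ?_⟩
        by_contra hpj
        rw [mem_inter] at hp
        exact disjoint_left.1 hdis hp.1 (mem_sdiff.2 ⟨hp.2, hpj⟩)
      rw [mul_smul_comm, wedgeOf_mul_wedgeOf, if_neg hik, smul_zero]
    · rw [mul_zero]
  have second : lcontr (wedgeOf v j) (wedgeOf v i * wedgeOf v k) = 0 := by
    rw [wedgeOf_mul_wedgeOf]
    split_ifs with hik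
    · have hj : ¬ j ⊆ i ∪ k := fun hj =>
        h ⟨hj, by rw [disjoint_iff_inter_eq_empty.1 hik]; exact empty_subset j⟩
      rw [map_smul, lcontr_wedgeOf hinn hc, if_neg hj, smul_zero]
    · rw [map_zero]
  rw [supercommutator_creation_annihilation_apply, first, second, smul_zero, sub_zero]

theorem supercommutator_creation_annihilation_wedgeOf_venn (hinn : InnerOK innE)
    (hc : ContrOK innE lcontr) (v : OrthonormalBasis (Fin n) ℝ X) {a b c d e : Finset (Fin n)}
    (hab : Disjoint a b) (hac : Disjoint a c) (had : Disjoint a d) (hae : Disjoint a e)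
    (hbc : Disjoint b c) (hbd : Disjoint b d) (hbe : Disjoint b e) (hcd : Disjoint c d)
    (hce : Disjoint c e) (hde : Disjoint d e) :
    supercommutator (creation v (a ∪ c ∪ d)) (annihilation lcontr v (b ∪ c ∪ d))
        #(a ∪ c ∪ d) #(b ∪ c ∪ d) (wedgeOf v (b ∪ c ∪ e)) =
      (((if d = ∅ then 1 else 0) - (if c = ∅ then 1 else 0)) *
        (-1 : ℝ) ^ (#d + npairs (a ∪ b) (d ∪ e))) • wedgeOf v (a ∪ c ∪ e) := by
  have first : wedgeOf v (a ∪ c ∪ d) * lcontr (wedgeOf v (b ∪ c ∪ d)) (wedgeOf v (b ∪ c ∪ e)) =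
      if d = ∅ then (-1 : ℝ) ^ npairs (a ∪ b) e • wedgeOf v (a ∪ c ∪ e) else 0 := by
    rw [lcontr_wedgeOf hinn hc]
    obtain rfl | hd := eq_or_ne d ∅
    · rw [union_empty, union_empty, if_pos subset_union_left,
        union_sdiff_cancel_left (disjoint_union_left.2 ⟨hbe, hce⟩), mul_smul_comm,
        wedgeOf_mul_wedgeOf, if_pos (disjoint_union_left.2 ⟨hae, hce⟩), smul_smul, ← pow_add,
        if_pos rfl]
      refine congrArg (· • _) (neg_one_pow_eq_of_mod_two_eq ?_)
      rw [npairs_union_left hbc, npairs_union_left hac, npairs_union_left hab]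
      omega
    · have hjk : ¬ b ∪ c ∪ d ⊆ b ∪ c ∪ e := fun h => hd <| bot_eq_empty ▸
        (disjoint_union_right.2 ⟨disjoint_union_right.2 ⟨hbd.symm, hcd.symm⟩, hde⟩).eq_bot_of_le
          (subset_union_right.trans h)
      rw [if_neg hjk, mul_zero, if_neg hd]
  have second : (-1 : ℝ) ^ (#(a ∪ c ∪ d) * #(b ∪ c ∪ d)) •
        lcontr (wedgeOf v (b ∪ c ∪ d)) (wedgeOf v (a ∪ c ∪ d) * wedgeOf v (b ∪ c ∪ e)) =
      if c = ∅ then (-1 : ℝ) ^ (#d + npairs (a ∪ b) (d ∪ e)) • wedgeOf v (a ∪ c ∪ e) else 0 := by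
    rw [wedgeOf_mul_wedgeOf]
    obtain rfl | hc0 := eq_or_ne c ∅
    · have hik : Disjoint (a ∪ d) (b ∪ e) := by
        simp [disjoint_union_left, disjoint_union_right, hab, hae, hbd.symm, hde]
      have hikj : (a ∪ d ∪ (b ∪ e)) \ (b ∪ d) = a ∪ e := by
        rw [show a ∪ d ∪ (b ∪ e) = a ∪ e ∪ (b ∪ d) by ac_rfl]
        refine union_sdiff_cancel_right ?_
        simp [disjoint_union_left, disjoint_union_right, hab, had, hbe.symm, hde.symm]
      simp only [union_empty]
      rw [if_pos hik, map_smul, lcontr_wedgeOf hinn hc,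
        if_pos (union_subset (subset_union_left.trans subset_union_right)
          (subset_union_right.trans subset_union_left)),
        hikj, smul_smul, smul_smul, ← pow_add, ← pow_add, if_pos trivial]
      exact congrArg (· • _) (neg_one_pow_eq_of_mod_two_eq
        (card_mul_card_add_npairs_add_npairs_mod_two hab had hae hbd hbe hde))
    · obtain ⟨p, hp⟩ := nonempty_iff_ne_empty.2 hc0
      have hik : ¬ Disjoint (a ∪ c ∪ d) (b ∪ c ∪ e) :=
        not_disjoint_iff.2 ⟨p, by simp [hp], by simp [hp]⟩
      rw [if_neg hik, map_zero, smul_zero, if_neg hc0]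
  rw [supercommutator_creation_annihilation_apply, first, second]
  by_cases hd : d = ∅ <;> by_cases hc0 : c = ∅ <;> simp [hd, hc0]

theorem supercommutator_creation_annihilation_wedgeOf (hinn : InnerOK innE)
    (hc : ContrOK innE lcontr) (v : OrthonormalBasis (Fin n) ℝ X) (i j k : Finset (Fin n)) :
    let a := i \ (j ∪ k); let b := (j ∩ k) \ i; let c := i ∩ j ∩ k
    let d := (i ∩ j) \ k; let e := k \ (i ∪ j); let x := j \ (i ∪ k)
    let y := (i ∩ k) \ j
    supercommutator (creation v i) (annihilation lcontr v j) #i #j (wedgeOf v k) =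
      ((if x ∪ y = ∅ then (1 : ℝ) else 0) *
        ((if d = ∅ then (1 : ℝ) else 0) - (if c = ∅ then (1 : ℝ) else 0)) *
        (-1 : ℝ) ^ (#d + npairs (a ∪ b) (d ∪ e))) • wedgeOf v (a ∪ c ∪ e) := by
  intro a b c d e x y
  by_cases hxy : x ∪ y = ∅
  · obtain ⟨hi, hj, hk⟩ : i = a ∪ c ∪ d ∧ j = b ∪ c ∪ d ∧ k = b ∪ c ∪ e := by
      obtain ⟨hx, hy⟩ := union_eq_empty.1 hxy
      simp only [x, y, sdiff_eq_empty_iff_subset, subset_iff, mem_union, mem_inter] at hx hy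
      refine ⟨?_, ?_, ?_⟩ <;> ext p <;>
        simp only [a, b, c, d, e, mem_union, mem_inter, mem_sdiff] <;> grind
    rw [if_pos hxy, one_mul, ← supercommutator_creation_annihilation_wedgeOf_venn hinn hc v,
      ← hi, ← hj, ← hk]
    all_goals
      refine disjoint_left.2 fun p => ?_
      simp only [a, b, c, d, e, mem_union, mem_inter, mem_sdiff]
      tauto
  · rw [if_neg hxy, zero_mul, zero_mul, zero_smul]
    refine supercommutator_creation_annihilation_wedgeOf_of_not_subset hinn hc v fun ⟨hx, hy⟩ => ?_
    exact hxy (by simp [x, y, sdiff_eq_empty_iff_subset, hx, hy])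

end

theorem supercommutator_on_basis_multivector_general {X : Type*} [NormedAddCommGroup X]
    [InnerProductSpace ℝ X]
    (innE : ExteriorAlgebra ℝ X →ₗ[ℝ] ExteriorAlgebra ℝ X →ₗ[ℝ] ℝ)
    (lcontr : ExteriorAlgebra ℝ X →ₗ[ℝ] ExteriorAlgebra ℝ X →ₗ[ℝ] ExteriorAlgebra ℝ X)
    (hinn : InnerOK innE) (hc : ContrOK innE lcontr)
    {n : ℕ} (v : OrthonormalBasis (Fin n) ℝ X) (i j k : Finset (Fin n)) :
    let a := i \ (j ∪ k); let b := (j ∩ k) \ i; let c := i ∩ j ∩ k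
    let d := (i ∩ j) \ k; let e := k \ (i ∪ j); let x := j \ (i ∪ k)
    let y := (i ∩ k) \ j
    (wedgeOf (⇑v) i * lcontr (wedgeOf (⇑v) j) (wedgeOf (⇑v) k) -
        (-1 : ℝ) ^ (i.card * j.card) •
          lcontr (wedgeOf (⇑v) j) (wedgeOf (⇑v) i * wedgeOf (⇑v) k) =
      ((if x ∪ y = ∅ then (1 : ℝ) else 0) *
        ((if d = ∅ then (1 : ℝ) else 0) - (if c = ∅ then (1 : ℝ) else 0)) *
        (-1 : ℝ) ^ (d.card + npairs (a ∪ b) (d ∪ e))) • wedgeOf (⇑v) (a ∪ c ∪ e)) ∧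
    -- in particular, the supercommutator annihilates `v_k` unless
    -- `x = y = ∅` and exactly one of `c`, `d` is empty
    (¬(x = ∅ ∧ y = ∅ ∧ Xor' (c = ∅) (d = ∅)) →
      wedgeOf (⇑v) i * lcontr (wedgeOf (⇑v) j) (wedgeOf (⇑v) k) -
        (-1 : ℝ) ^ (i.card * j.card) •
          lcontr (wedgeOf (⇑v) j) (wedgeOf (⇑v) i * wedgeOf (⇑v) k) = 0) := by
  have key := supercommutator_creation_annihilation_wedgeOf hinn hc v i j k
  refine ⟨key, fun h => key.trans ?_⟩
  clear key
  split_ifs <;> simp_all [Xor']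

/-- Action of the supercommutator `⦃a_i†, a_j⦄` on a basis
multivector `v_k`. -/
theorem supercommutator_on_basis_multivector {X : Type*} [NormedAddCommGroup X]
    [InnerProductSpace ℝ X] [FiniteDimensional ℝ X]
    (innE : ExteriorAlgebra ℝ X →ₗ[ℝ] ExteriorAlgebra ℝ X →ₗ[ℝ] ℝ)
    (lcontr : ExteriorAlgebra ℝ X →ₗ[ℝ] ExteriorAlgebra ℝ X →ₗ[ℝ] ExteriorAlgebra ℝ X)
    (hinn : InnerOK innE) (hc : ContrOK innE lcontr)
    {n : ℕ} (v : OrthonormalBasis (Fin n) ℝ X) (i j k : Finset (Fin n)) :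
    let a := i \ (j ∪ k); let b := (j ∩ k) \ i; let c := i ∩ j ∩ k
    let d := (i ∩ j) \ k; let e := k \ (i ∪ j); let x := j \ (i ∪ k)
    let y := (i ∩ k) \ j
    (wedgeOf (⇑v) i * lcontr (wedgeOf (⇑v) j) (wedgeOf (⇑v) k) -
        (-1 : ℝ) ^ (i.card * j.card) •
          lcontr (wedgeOf (⇑v) j) (wedgeOf (⇑v) i * wedgeOf (⇑v) k) =
      ((if x ∪ y = ∅ then (1 : ℝ) else 0) *
        ((if d = ∅ then (1 : ℝ) else 0) - (if c = ∅ then (1 : ℝ) else 0)) *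
        (-1 : ℝ) ^ (d.card + npairs (a ∪ b) (d ∪ e))) • wedgeOf (⇑v) (a ∪ c ∪ e)) ∧
    -- in particular, the supercommutator annihilates `v_k` unless
    -- `x = y = ∅` and exactly one of `c`, `d` is empty
    (¬(x = ∅ ∧ y = ∅ ∧ Xor' (c = ∅) (d = ∅)) →
      wedgeOf (⇑v) i * lcontr (wedgeOf (⇑v) j) (wedgeOf (⇑v) k) -
        (-1 : ℝ) ^ (i.card * j.card) •
          lcontr (wedgeOf (⇑v) j) (wedgeOf (⇑v) i * wedgeOf (⇑v) k) = 0) :=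
  supercommutator_on_basis_multivector_general innE lcontr hinn hc v i j k

end
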